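/- Let L be a non-empty regular language. Let 𝒞 be the collection of all non-empty sets B of positive atoms of L such that B ⊆ {A atom of L : A ⊆ K_j} for some left quotient K_j of L. Then there exist a transition function β, a set of initial states 𝒞_I ⊆ 𝒞, and a set of final states 𝒞_F ⊆ 𝒞 such that (𝒞, Σ, β, 𝒞_I, 𝒞_F) is a trim reduced atomic NFA accepting L whose state set is exactly 𝒞. -/

import Mathlib

/-! Basic definitions: left quotients, atoms, and operations on finite automata. -/

/-- The left quotient of a language `L` by a word `w`: `w⁻¹L = {x | w ++ x ∈ L}`. -/
def leftQuot {α : Type} (L : Language α) (w : List α) : Language α := {x | w ++ x ∈ L}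

/-- The set of all left quotients of `L`. -/
def quots {α : Type} (L : Language α) : Set (Language α) := {K | ∃ w : List α, K = leftQuot L w}

/-- `A` is an atom of `L`: a non-empty intersection `K̃_0 ∩ ⋯ ∩ K̃_{n−1}` where each `K̃_i` is a
quotient `K_i` of `L` or its complement (`S` is the set of uncomplemented quotients, so a word is
in the intersection iff it belongs exactly to the quotients in `S`). -/
def IsAtomOf {α : Type} (L A : Language α) : Prop :=
  (∃ x, x ∈ A) ∧ ∃ S : Set (Language α), S ⊆ quots L ∧
    A = {x | ∀ K ∈ quots L, (x ∈ K ↔ K ∈ S)}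

/-- A positive atom: at least one term of its defining intersection is uncomplemented,
equivalently the atom is contained in some quotient of `L`. -/
def IsPositiveAtomOf {α : Type} (L A : Language α) : Prop :=
  IsAtomOf L A ∧ ∃ K ∈ quots L, ∀ x ∈ A, x ∈ K

namespace NFA

/-- The right language of a state `q`: words accepted starting from `q`. -/
def rightLang {α σ : Type} (M : NFA α σ) (q : σ) : Language α :=
  {w | ∃ p ∈ M.accept, p ∈ M.evalFrom {q} w}

/-- The left language of a state `q`: words leading from the initial states to `q`. -/
def leftLang {α σ : Type} (M : NFA α σ) (q : σ) : Language α :=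
  {w | q ∈ M.eval w}

/-- An NFA is trim if every state has a non-empty left language and right language. -/
def IsTrim {α σ : Type} (M : NFA α σ) : Prop :=
  ∀ q, (∃ w, w ∈ M.leftLang q) ∧ (∃ w, w ∈ M.rightLang q)

/-- An NFA is reduced if distinct states have distinct right languages. -/
def IsReduced {α σ : Type} (M : NFA α σ) : Prop :=
  ∀ q p, M.rightLang q = M.rightLang p → q = p

/-- An NFA is atomic if the right language of every state is a union of positive atoms of the
accepted language. -/
def IsAtomic {α σ : Type} (M : NFA α σ) : Prop :=
  ∀ q, ∃ 𝒜 : Set (Language α), (∀ A ∈ 𝒜, IsPositiveAtomOf M.accepts A) ∧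
    M.rightLang q = {w | ∃ A ∈ 𝒜, w ∈ A}

/-- Reversal of an NFA: interchange initial and final states and reverse all transitions. -/
def rev {α σ : Type} (M : NFA α σ) : NFA α σ :=
  ⟨fun q a => {p | q ∈ M.step p a}, M.accept, M.start⟩

/-- States of the determinization of an NFA: the subsets of states reachable from the initial
subset. -/
def detStates {α σ : Type} (M : NFA α σ) : Type := {S : Set σ // ∃ w, M.eval w = S}

instance {α σ : Type} [Finite σ] (M : NFA α σ) : Finite M.detStates :=
  Subtype.finite

/-- Determinization of an NFA by the subset construction, keeping only the subsets reachable
from the initial subset. -/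
def det {α σ : Type} (M : NFA α σ) : DFA α M.detStates where
  step S a := ⟨M.stepSet S.1 a, by
    obtain ⟨w, hw⟩ := S.2
    exact ⟨w ++ [a], by rw [NFA.eval_append_singleton, hw]⟩⟩
  start := ⟨M.start, [], rfl⟩
  accept := {S | ∃ p ∈ M.accept, p ∈ S.1}

end NFA

/-- Reversal of a DFA, yielding an NFA. -/
def DFA.rev {α σ : Type} (M : DFA α σ) : NFA α σ :=
  ⟨fun q a => {p | M.step p a = q}, M.accept, {M.start}⟩

/-- A DFA is minimal if no DFA accepting the same language has fewer states. -/
def DFA.IsMinimal {α σ : Type} (M : DFA α σ) : Prop :=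
  ∀ (σ' : Type) (_ : Finite σ') (M' : DFA α σ'), M'.accepts = M.accepts →
    Nat.card σ ≤ Nat.card σ'

/-!
Identify a state `B` with the union `B.lang` of its atoms. Let `B →a C` when
`C.lang ⊆ a⁻¹ B.lang`, let `B` be initial when `B.lang ⊆ L`, and final when `ε ∈ B.lang`.
Atoms are closed under prefixing a letter in the sense that `a · atom(w) ⊆ atom(a w)`, so every
word `a w ∈ B.lang` is realised by a transition into the one-atom state `{atom(w)}`; this gives
right language `B.lang` to every state. Every non-empty quotient `u⁻¹L` is the union of the positive
atoms it contains, so it is itself a state, and by induction the states reached by `u` are exactly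
those with `B.lang ⊆ u⁻¹L`. Atoms are non-empty and pairwise disjoint, so `B ↦ B.lang` is
injective and the automaton is reduced.
-/

namespace NFA

variable {α σ : Type} (M : NFA α σ)

theorem nil_mem_rightLang {q : σ} : [] ∈ M.rightLang q ↔ q ∈ M.accept := by
  change [] ∈ M.acceptsFrom {q} ↔ _
  simp

theorem cons_mem_rightLang {q : σ} {a : α} {w : List α} :
    a :: w ∈ M.rightLang q ↔ ∃ p ∈ M.step q a, w ∈ M.rightLang p := by
  change a :: w ∈ M.acceptsFrom {q} ↔ ∃ p ∈ M.step q a, w ∈ M.acceptsFrom {p}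
  rw [cons_mem_acceptsFrom, stepSet_singleton]
  constructor
  · rintro ⟨s, hs, hsw⟩
    obtain ⟨p, hp, hps⟩ := mem_evalFrom_iff_exists.mp hsw
    exact ⟨p, hp, s, hs, hps⟩
  · rintro ⟨p, hp, s, hs, hps⟩
    exact ⟨s, hs, mem_evalFrom_iff_exists.mpr ⟨p, hp, hps⟩⟩

/-- The right languages are the unique solution of the language equations of `M`. -/
theorem rightLang_eq_of_nil_cons (f : σ → Language α)
    (nil : ∀ q, [] ∈ f q ↔ q ∈ M.accept)
    (cons : ∀ q a w, a :: w ∈ f q ↔ ∃ p ∈ M.step q a, w ∈ f p) :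
    M.rightLang = f := by
  funext q
  ext w
  induction w generalizing q with
  | nil => rw [nil_mem_rightLang, nil]
  | cons a w ih => simp only [cons_mem_rightLang, cons, ih]

theorem eval_eq_of_nil_append_singleton (P : List α → Set σ) (nil : M.start = P [])
    (append_singleton : ∀ u a, M.stepSet (P u) a = P (u ++ [a])) :
    M.eval = P := by
  funext w
  induction w using List.reverseRecOn with
  | nil => exact nil
  | append_singleton u a ih => rw [eval_append_singleton, ih, append_singleton]

end NFA

section Atoms

variable {α : Type} {L A K : Language α} {u w x y : List α} {a : α}

theorem mem_leftQuot_append_singleton :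
    w ∈ leftQuot L (u ++ [a]) ↔ a :: w ∈ leftQuot L u := by
  change u ++ [a] ++ w ∈ L ↔ u ++ a :: w ∈ L
  simp

theorem nil_mem_leftQuot : [] ∈ leftQuot L w ↔ w ∈ L := by
  change w ++ [] ∈ L ↔ w ∈ L
  rw [List.append_nil]

theorem cons_preimage_mem_quots (hK : K ∈ quots L) (a : α) : {w | a :: w ∈ K} ∈ quots L := by
  obtain ⟨u, rfl⟩ := hK
  exact ⟨u ++ [a], by ext w; exact mem_leftQuot_append_singleton.symm⟩

def atomOf (L : Language α) (x : List α) : Language α :=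
  {y | ∀ K ∈ quots L, (y ∈ K ↔ x ∈ K)}

theorem mem_atomOf_self : x ∈ atomOf L x := fun _ _ => Iff.rfl

theorem isAtomOf_atomOf (L : Language α) (x : List α) : IsAtomOf L (atomOf L x) := by
  refine ⟨⟨x, mem_atomOf_self⟩, {K | K ∈ quots L ∧ x ∈ K}, fun K hK => hK.1, ?_⟩
  ext y
  exact forall₂_congr fun K hK => by simp [hK]

theorem IsAtomOf.eq_atomOf (hA : IsAtomOf L A) (hx : x ∈ A) : A = atomOf L x := by
  obtain ⟨-, S, -, rfl⟩ := hA
  ext y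
  exact forall₂_congr fun K hK => by rw [hx K hK]

theorem atomOf_le (hK : K ∈ quots L) (hx : x ∈ K) : atomOf L x ≤ K :=
  fun _ hy => (hy K hK).mpr hx

theorem isPositiveAtomOf_atomOf (hK : K ∈ quots L) (hx : x ∈ K) :
    IsPositiveAtomOf L (atomOf L x) :=
  ⟨isAtomOf_atomOf L x, K, hK, atomOf_le hK hx⟩

theorem cons_mem_atomOf_cons (hy : y ∈ atomOf L x) : a :: y ∈ atomOf L (a :: x) :=
  fun _ hK => hy _ (cons_preimage_mem_quots hK a)

end Atoms

section MaxAtomicNFA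

variable {α : Type} {L A : Language α} {u w x : List α} {a : α}

abbrev MaxAtomicState (L : Language α) : Type :=
  {Bs : Set (Language α) // Bs.Nonempty ∧ (∀ A ∈ Bs, IsPositiveAtomOf L A) ∧
    ∃ K ∈ quots L, ∀ A ∈ Bs, ∀ x ∈ A, x ∈ K}

namespace MaxAtomicState

variable (B C : MaxAtomicState L)

def lang : Language α := {w | ∃ A ∈ B.1, w ∈ A}

theorem exists_mem_lang : ∃ w, w ∈ B.lang := by
  obtain ⟨A, hA⟩ := B.2.1
  obtain ⟨w, hw⟩ := (B.2.2.1 A hA).1.1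
  exact ⟨w, A, hA, hw⟩

theorem exists_lang_le_leftQuot : ∃ u, B.lang ≤ leftQuot L u := by
  obtain ⟨K, ⟨u, rfl⟩, hK⟩ := B.2.2.2
  exact ⟨u, fun w ⟨A, hA, hw⟩ => hK A hA w hw⟩

theorem val_subset_of_lang_le (h : B.lang ≤ C.lang) : B.1 ⊆ C.1 := by
  intro A hA
  obtain ⟨x, hx⟩ := (B.2.2.1 A hA).1.1
  obtain ⟨A', hA', hx'⟩ := h ⟨A, hA, hx⟩
  rwa [(B.2.2.1 A hA).1.eq_atomOf hx, ← (C.2.2.1 A' hA').1.eq_atomOf hx']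

theorem lang_injective : Function.Injective (lang (L := L)) := fun B C h =>
  Subtype.ext <| (val_subset_of_lang_le B C h.le).antisymm (val_subset_of_lang_le C B h.ge)

def ofPositiveAtom (hA : IsPositiveAtomOf L A) : MaxAtomicState L :=
  ⟨{A}, Set.singleton_nonempty A, by simpa using hA, by simpa using hA.2⟩

@[simp]
theorem lang_ofPositiveAtom (hA : IsPositiveAtomOf L A) : (ofPositiveAtom hA).lang = A := by
  ext w
  exact ⟨fun ⟨_, hA', hw⟩ => (Set.mem_singleton_iff.mp hA') ▸ hw,
    fun hw => ⟨A, rfl, hw⟩⟩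

def ofLeftQuot (hx : x ∈ leftQuot L u) : MaxAtomicState L :=
  ⟨{A | IsPositiveAtomOf L A ∧ A ≤ leftQuot L u},
    ⟨atomOf L x, isPositiveAtomOf_atomOf ⟨u, rfl⟩ hx, atomOf_le ⟨u, rfl⟩ hx⟩,
    fun _ hA => hA.1, leftQuot L u, ⟨u, rfl⟩, fun _ hA _ hw => hA.2 hw⟩

@[simp]
theorem lang_ofLeftQuot (hx : x ∈ leftQuot L u) : (ofLeftQuot hx).lang = leftQuot L u := by
  ext w
  refine ⟨fun ⟨A, hA, hw⟩ => hA.2 hw, fun hw => ⟨atomOf L w, ?_, mem_atomOf_self⟩⟩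
  exact ⟨isPositiveAtomOf_atomOf ⟨u, rfl⟩ hw, atomOf_le ⟨u, rfl⟩ hw⟩

theorem cons_mem_lang_iff :
    a :: w ∈ B.lang ↔
      ∃ C : MaxAtomicState L, C.lang ≤ {v | a :: v ∈ B.lang} ∧ w ∈ C.lang := by
  refine ⟨fun ⟨A, hA, haw⟩ => ?_, fun ⟨C, hC, hw⟩ => hC hw⟩
  obtain ⟨hAtom, K, hK, hAK⟩ := B.2.2.1 A hA
  have hw : w ∈ {v | a :: v ∈ K} := hAK _ haw
  refine ⟨ofPositiveAtom (isPositiveAtomOf_atomOf (cons_preimage_mem_quots hK a) hw), ?_, ?_⟩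
  · rw [lang_ofPositiveAtom]
    intro v hv
    exact ⟨A, hA, hAtom.eq_atomOf haw ▸ cons_mem_atomOf_cons hv⟩
  · rw [lang_ofPositiveAtom]
    exact mem_atomOf_self

/-- The predecessor is the state `u⁻¹L` itself, non-empty because `C` is. -/
theorem lang_le_leftQuot_append_singleton_iff :
    C.lang ≤ leftQuot L (u ++ [a]) ↔
      ∃ B : MaxAtomicState L, B.lang ≤ leftQuot L u ∧ C.lang ≤ {v | a :: v ∈ B.lang} := by
  refine ⟨fun h => ?_, fun ⟨B, hB, hC⟩ w hw =>
    mem_leftQuot_append_singleton.mpr (hB (hC hw))⟩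
  obtain ⟨x, hx⟩ := C.exists_mem_lang
  refine ⟨ofLeftQuot (mem_leftQuot_append_singleton.mp (h hx)), (lang_ofLeftQuot _).le, ?_⟩
  rw [lang_ofLeftQuot]
  exact fun w hw => mem_leftQuot_append_singleton.mp (h hw)

end MaxAtomicState

open MaxAtomicState

def maxAtomicNFA (L : Language α) : NFA α (MaxAtomicState L) where
  step B a := {C | C.lang ≤ {v | a :: v ∈ B.lang}}
  start := {B | B.lang ≤ L}
  accept := {B | [] ∈ B.lang}

theorem maxAtomicNFA_rightLang : (maxAtomicNFA L).rightLang = lang :=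
  NFA.rightLang_eq_of_nil_cons _ _ (fun _ => Iff.rfl) fun B _ _ => B.cons_mem_lang_iff

theorem maxAtomicNFA_eval : (maxAtomicNFA L).eval = fun u => {B | B.lang ≤ leftQuot L u} :=
  NFA.eval_eq_of_nil_append_singleton _ _ rfl fun u a => by
    ext C
    rw [NFA.mem_stepSet]
    exact (lang_le_leftQuot_append_singleton_iff C).symm

theorem maxAtomicNFA_accepts : (maxAtomicNFA L).accepts = L := by
  ext w
  change (∃ B ∈ (maxAtomicNFA L).accept, B ∈ (maxAtomicNFA L).eval w) ↔ w ∈ L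
  rw [maxAtomicNFA_eval, ← nil_mem_leftQuot]
  refine ⟨fun ⟨B, hε, hB⟩ => hB hε, fun hε => ?_⟩
  refine ⟨ofPositiveAtom (isPositiveAtomOf_atomOf ⟨w, rfl⟩ hε), ?_, ?_⟩
  · change [] ∈ (ofPositiveAtom _).lang
    rw [lang_ofPositiveAtom]
    exact mem_atomOf_self
  · change (ofPositiveAtom _).lang ≤ _
    rw [lang_ofPositiveAtom]
    exact atomOf_le ⟨w, rfl⟩ hε

theorem maxAtomicNFA_isTrim : (maxAtomicNFA L).IsTrim := by
  intro B
  obtain ⟨u, hu⟩ := B.exists_lang_le_leftQuot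
  refine ⟨⟨u, ?_⟩, ?_⟩
  · change B ∈ (maxAtomicNFA L).eval u
    rw [maxAtomicNFA_eval]
    exact hu
  · rw [maxAtomicNFA_rightLang]
    exact B.exists_mem_lang

theorem maxAtomicNFA_isReduced : (maxAtomicNFA L).IsReduced := by
  rw [NFA.IsReduced, maxAtomicNFA_rightLang]
  exact fun _ _ h => lang_injective h

theorem maxAtomicNFA_isAtomic : (maxAtomicNFA L).IsAtomic := by
  rw [NFA.IsAtomic, maxAtomicNFA_accepts, maxAtomicNFA_rightLang]
  exact fun B => ⟨B.1, B.2.2.1, rfl⟩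

end MaxAtomicNFA

theorem maximal_atomic_nfa_general {α : Type} {L : Language α} :
    ∃ M : NFA α {Bs : Set (Language α) // Bs.Nonempty ∧ (∀ A ∈ Bs, IsPositiveAtomOf L A) ∧
        ∃ K ∈ quots L, ∀ A ∈ Bs, ∀ x ∈ A, x ∈ K},
      M.accepts = L ∧ M.IsTrim ∧ M.IsReduced ∧ M.IsAtomic :=
  ⟨maxAtomicNFA L, maxAtomicNFA_accepts, maxAtomicNFA_isTrim, maxAtomicNFA_isReduced,
    maxAtomicNFA_isAtomic⟩

/-- **Maximal atomic NFA.** Let `𝒞` be the collection of all non-empty sets of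
positive atoms of a non-empty regular language `L` all of whose members are contained in some
single left quotient of `L`. Then there is an NFA with state set exactly `𝒞` that is a trim
reduced atomic NFA accepting `L`. -/
theorem maximal_atomic_nfa {α : Type} [Finite α] {L : Language α} (hL : L.IsRegular)
    (hne : ∃ w, w ∈ L) :
    ∃ M : NFA α {Bs : Set (Language α) // Bs.Nonempty ∧ (∀ A ∈ Bs, IsPositiveAtomOf L A) ∧
        ∃ K ∈ quots L, ∀ A ∈ Bs, ∀ x ∈ A, x ∈ K},
      M.accepts = L ∧ M.IsTrim ∧ M.IsReduced ∧ M.IsAtomic :=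
  maximal_atomic_nfa_general
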